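/- arXiv:2604.21994 — 6 statements merged into one kernel-verified Lean document; each statement's English description precedes it below -/
import Mathlib

section
/- Let A be a real n×k matrix with full column rank k (so that AᵀA is invertible) and let V be a symmetric positive definite k×k real matrix. Then the matrix N = A (AᵀA)⁻¹ V⁻¹ (AᵀA)⁻¹ Aᵀ is a Moore–Penrose pseudoinverse of A V Aᵀ; that is, N satisfies the four Penrose equations with M = A V Aᵀ. -/
/-!
Write `B = AᵀA` and `P = A B⁻¹ Aᵀ`, the orthogonal projection onto the column space of `A`.
Products and transposes of matrices of the form `A X Aᵀ` stay of that form, with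
`(A X Aᵀ)(A Y Aᵀ) = A (X B Y) Aᵀ`. With `M = A V Aᵀ` and `N = A (B⁻¹ V⁻¹ B⁻¹) Aᵀ`, both `MN` and
`NM` collapse to `P`, which is symmetric because `B` is, and `PM = M`, `PN = N` since `B⁻¹B = 1`.
-/

open Matrix

/-- `N` is a Moore–Penrose pseudoinverse of `M`: the four Penrose equations hold. -/
def IsMoorePenrose {n m : ℕ} (M : Matrix (Fin n) (Fin m) ℝ)
    (N : Matrix (Fin m) (Fin n) ℝ) : Prop :=
  M * N * M = M ∧ N * M * N = N ∧ (M * N)ᵀ = M * N ∧ (N * M)ᵀ = N * M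

namespace Matrix

theorem isUnit_of_rank_eq_card {K n : Type*} [Field K] [Fintype n] [DecidableEq n]
    {B : Matrix n n K} (h : B.rank = Fintype.card n) : IsUnit B := by
  rw [← mulVec_surjective_iff_isUnit, ← Set.range_eq_univ, ← coe_mulVecLin, ← LinearMap.coe_range,
    Submodule.coe_eq_univ]
  exact Submodule.eq_top_of_finrank_eq (by rw [← rank, h, Module.finrank_fintype_fun_eq_card])

section Sandwich

variable {m k R : Type*} [Fintype k] [CommRing R]

theorem sandwich_mul_sandwich [Fintype m] (A : Matrix m k R) (X Y : Matrix k k R) :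
    A * X * Aᵀ * (A * Y * Aᵀ) = A * (X * (Aᵀ * A) * Y) * Aᵀ := by
  simp only [Matrix.mul_assoc]

theorem transpose_sandwich (A : Matrix m k R) (X : Matrix k k R) :
    (A * X * Aᵀ)ᵀ = A * Xᵀ * Aᵀ := by
  simp only [transpose_mul, transpose_transpose, Matrix.mul_assoc]

end Sandwich

end Matrix

theorem isMoorePenrose_sandwich {n k : ℕ} (A : Matrix (Fin n) (Fin k) ℝ)
    {X Y : Matrix (Fin k) (Fin k) ℝ}
    (h₁ : X * (Aᵀ * A) * Y * (Aᵀ * A) * X = X) (h₂ : Y * (Aᵀ * A) * X * (Aᵀ * A) * Y = Y)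
    (h₃ : (X * (Aᵀ * A) * Y)ᵀ = X * (Aᵀ * A) * Y) (h₄ : (Y * (Aᵀ * A) * X)ᵀ = Y * (Aᵀ * A) * X) :
    IsMoorePenrose (A * X * Aᵀ) (A * Y * Aᵀ) := by
  refine ⟨?_, ?_, ?_, ?_⟩ <;>
    simp only [sandwich_mul_sandwich, transpose_sandwich, h₁, h₂, h₃, h₄]

/-- If `A` has full column rank `k` and `V` is symmetric positive definite, then
`A (AᵀA)⁻¹ V⁻¹ (AᵀA)⁻¹ Aᵀ` is a Moore–Penrose pseudoinverse of `A V Aᵀ`. -/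
theorem isMoorePenrose_of_embedding {n k : ℕ}
    (A : Matrix (Fin n) (Fin k) ℝ) (hA : A.rank = k)
    (V : Matrix (Fin k) (Fin k) ℝ) (hV : V.PosDef) :
    IsMoorePenrose (A * V * Aᵀ)
      (A * (Aᵀ * A)⁻¹ * V⁻¹ * (Aᵀ * A)⁻¹ * Aᵀ) := by
  set B := Aᵀ * A
  have hB : IsUnit B.det := (isUnit_iff_isUnit_det B).mp <|
    isUnit_of_rank_eq_card (by rw [rank_transpose_mul_self, hA, Fintype.card_fin])
  have hVdet : IsUnit V.det := (isUnit_iff_isUnit_det V).mp hV.isUnit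
  have hBinv_symm : (B⁻¹)ᵀ = B⁻¹ := by
    rw [transpose_nonsing_inv, transpose_mul, transpose_transpose]
  have hMN : V * B * (B⁻¹ * V⁻¹ * B⁻¹) = B⁻¹ := by
    simp only [Matrix.mul_assoc, mul_nonsing_inv_cancel_left _ _ hB,
      mul_nonsing_inv_cancel_left _ _ hVdet]
  have hNM : B⁻¹ * V⁻¹ * B⁻¹ * B * V = B⁻¹ := by
    simp only [Matrix.mul_assoc, nonsing_inv_mul_cancel_left _ _ hB,
      nonsing_inv_mul _ hVdet, Matrix.mul_one]
  have hcancel : ∀ X : Matrix (Fin k) (Fin k) ℝ, B⁻¹ * B * X = X := fun X => by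
    rw [nonsing_inv_mul _ hB, Matrix.one_mul]
  have hN := isMoorePenrose_sandwich A (X := V) (Y := B⁻¹ * V⁻¹ * B⁻¹)
    (by rw [hMN, hcancel]) (by rw [hNM, hcancel])
    (by rw [hMN, hBinv_symm]) (by rw [hNM, hBinv_symm])
  simpa only [Matrix.mul_assoc] using hN
end

section
/- Let A be a real n×k matrix with full column rank k and let V be a symmetric positive definite k×k real matrix. If N is any Moore–Penrose pseudoinverse of A V Aᵀ (i.e., N satisfies the four Penrose equations with A V Aᵀ), then Aᵀ N A = V⁻¹. -/
open Matrix

/-!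
Full column rank makes `A` cancellable on the left and `Aᵀ` cancellable on the right, so the
first Penrose equation `(A V Aᵀ) N (A V Aᵀ) = A V Aᵀ` collapses to `V (Aᵀ N A) V = V`, and
cancelling the invertible `V` once more leaves `V (Aᵀ N A) = 1`.
-/

namespace Matrix

variable {K l m n : Type*} [Field K] [Fintype n] {A : Matrix m n K}

theorem linearIndependent_cols_of_rank_eq_card (hA : A.rank = Fintype.card n) :
    LinearIndependent K A.col :=
  linearIndependent_iff_card_eq_finrank_span.mpr (hA ▸ A.rank_eq_finrank_span_cols)

theorem mul_right_injective_of_rank_eq_card (hA : A.rank = Fintype.card n) :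
    Function.Injective fun X : Matrix n l K => A * X := by
  intro X Y h
  have hA_inj := mulVec_injective_iff.mpr (linearIndependent_cols_of_rank_eq_card hA)
  ext i j
  have hcol : A *ᵥ (fun r => X r j) = A *ᵥ (fun r => Y r j) := by
    ext r
    simpa [mulVec, dotProduct, mul_apply] using congrFun (congrFun h r) j
  exact congrFun (hA_inj hcol) i

theorem mul_left_injective_transpose_of_rank_eq_card (hA : A.rank = Fintype.card n) :
    Function.Injective fun X : Matrix l n K => X * Aᵀ := fun X Y h =>
  transpose_injective <| mul_right_injective_of_rank_eq_card hA <| by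
    simpa only [transpose_mul, transpose_transpose] using congrArg transpose h

end Matrix

/-- If `A` has full column rank `k`, `V` is symmetric positive definite and `N` is
a Moore–Penrose pseudoinverse of `A V Aᵀ`, then `Aᵀ N A = V⁻¹`. -/
theorem transpose_pinv_embedding {n k : ℕ}
    (A : Matrix (Fin n) (Fin k) ℝ) (hA : A.rank = k)
    (V : Matrix (Fin k) (Fin k) ℝ) (hV : V.PosDef)
    (N : Matrix (Fin n) (Fin n) ℝ)
    (hN : IsMoorePenrose (A * V * Aᵀ) N) :
    Aᵀ * N * A = V⁻¹ := by
  have hA' : A.rank = Fintype.card (Fin k) := by rwa [Fintype.card_fin]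
  have hsandwich : V * (Aᵀ * N * A) * V = V := by
    apply mul_right_injective_of_rank_eq_card hA'
    apply mul_left_injective_transpose_of_rank_eq_card hA'
    simpa only [Matrix.mul_assoc] using hN.1
  have hright_inv : V * (Aᵀ * N * A) = 1 :=
    hV.isUnit.mul_right_cancel (by rwa [Matrix.one_mul])
  exact (inv_eq_right_inv hright_inv).symm
end

section
/- (Proposition 1, equivalence of reduced and full contrast representations.) Let y_b ∈ ℝᵏ, let X_b be a real k×m matrix, and let V_b be a symmetric positive definite k×k matrix. Let A be a real n×k matrix with full column rank, and set y = A y_b, X = A X_b, and V = A V_b Aᵀ. If V⁺ is any Moore–Penrose pseudoinverse of V, then Xᵀ V⁺ y = X_bᵀ V_b⁻¹ y_b and Xᵀ V⁺ X = X_bᵀ V_b⁻¹ X_b. -/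
/-!
Full column rank gives `A` a left inverse `L`. Sandwiching the Penrose equation `M V⁺ M = M`,
`M = A V_b Aᵀ`, between `L` and `Lᵀ` yields `V_b (Aᵀ V⁺ A) V_b = V_b`, hence `Aᵀ V⁺ A = V_b⁻¹`.
Both identities then follow by reassociating `Xᵀ V⁺ = X_bᵀ (Aᵀ V⁺)`.
-/

open Matrix

namespace Matrix

variable {m n R : Type*} [Fintype m] [Fintype n]

theorem exists_mul_eq_one_of_rank_eq_card [DecidableEq n] [Field R] {A : Matrix m n R}
    (hA : A.rank = Fintype.card n) : ∃ L : Matrix n m R, L * A = 1 := by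
  classical
  have hker : LinearMap.ker A.mulVecLin = ⊥ := by
    have := LinearMap.finrank_range_add_finrank_ker A.mulVecLin
    rw [← rank, hA, Module.finrank_fintype_fun_eq_card] at this
    exact Submodule.finrank_eq_zero.1 (by omega)
  obtain ⟨g, hg⟩ := A.mulVecLin.exists_leftInverse_of_injective hker
  refine ⟨LinearMap.toMatrix' g, ?_⟩
  rw [← LinearMap.toMatrix'_toLin' A, ← LinearMap.toMatrix'_comp, Matrix.toLin'_apply', hg,
    LinearMap.toMatrix'_id]

variable [DecidableEq n] [CommRing R]

theorem mul_mul_transpose_injective {L : Matrix n m R} {A : Matrix m n R} (hLA : L * A = 1) :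
    Function.Injective fun B : Matrix n n R => A * B * Aᵀ := by
  have hAL : Aᵀ * Lᵀ = 1 := by rw [← transpose_mul, hLA, transpose_one]
  intro B C (h : A * B * Aᵀ = A * C * Aᵀ)
  calc B = L * A * B * (Aᵀ * Lᵀ) := by rw [hLA, hAL, Matrix.one_mul, Matrix.mul_one]
    _ = L * (A * B * Aᵀ) * Lᵀ := by simp only [Matrix.mul_assoc]
    _ = L * (A * C * Aᵀ) * Lᵀ := by rw [h]
    _ = L * A * C * (Aᵀ * Lᵀ) := by simp only [Matrix.mul_assoc]
    _ = C := by rw [hLA, hAL, Matrix.one_mul, Matrix.mul_one]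

theorem eq_inv_of_mul_mul_self_eq {V X : Matrix n n R} (hV : IsUnit V)
    (h : V * X * V = V) : X = V⁻¹ := by
  have hVdet := (isUnit_iff_isUnit_det V).1 hV
  refine (inv_eq_left_inv ?_).symm
  calc X * V = V⁻¹ * V * X * V := by rw [nonsing_inv_mul _ hVdet, Matrix.one_mul]
    _ = V⁻¹ * (V * X * V) := by simp only [Matrix.mul_assoc]
    _ = 1 := by rw [h, nonsing_inv_mul _ hVdet]

theorem transpose_mul_mul_eq_inv_of_mul_mul_eq {L : Matrix n m R}
    {A : Matrix m n R} {V : Matrix n n R} {N : Matrix m m R} (hLA : L * A = 1) (hV : IsUnit V)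
    (h : A * V * Aᵀ * N * (A * V * Aᵀ) = A * V * Aᵀ) : Aᵀ * N * A = V⁻¹ := by
  refine eq_inv_of_mul_mul_self_eq hV (mul_mul_transpose_injective hLA ?_)
  simpa only [Matrix.mul_assoc] using h

end Matrix

/-- Proposition 1 (equivalence of reduced and full contrast representations):
the GLS score vector and Fisher information matrix coincide in the reduced and
full contrast representations. -/
theorem reduced_full_contrast_equiv {n k m : ℕ}
    (yb : Fin k → ℝ)
    (Xb : Matrix (Fin k) (Fin m) ℝ)
    (Vb : Matrix (Fin k) (Fin k) ℝ) (hVb : Vb.PosDef)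
    (A : Matrix (Fin n) (Fin k) ℝ) (hA : A.rank = k)
    (Vplus : Matrix (Fin n) (Fin n) ℝ)
    (hVplus : IsMoorePenrose (A * Vb * Aᵀ) Vplus) :
    ((A * Xb)ᵀ * Vplus).mulVec (A.mulVec yb) = (Xbᵀ * Vb⁻¹).mulVec yb ∧
    (A * Xb)ᵀ * Vplus * (A * Xb) = Xbᵀ * Vb⁻¹ * Xb := by
  obtain ⟨L, hLA⟩ := exists_mul_eq_one_of_rank_eq_card (hA.trans (Fintype.card_fin k).symm)
  have hInfo : Aᵀ * Vplus * A = Vb⁻¹ :=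
    transpose_mul_mul_eq_inv_of_mul_mul_eq hLA hVb.isUnit hVplus.1
  have hCross : (A * Xb)ᵀ * Vplus * A = Xbᵀ * Vb⁻¹ := by
    rw [← hInfo, transpose_mul]
    simp only [Matrix.mul_assoc]
  exact ⟨by rw [mulVec_mulVec, hCross], by rw [← Matrix.mul_assoc, hCross]⟩
end

section
/- Let y_b ∈ ℝᵏ, let X_b be a real k×m matrix, let V_b be a symmetric positive definite k×k matrix, let A be a real n×k matrix with full column rank, and set y = A y_b, X = A X_b, V = A V_b Aᵀ. Let V⁺ be any Moore–Penrose pseudoinverse of V, let I = Xᵀ V⁺ X and I_b = X_bᵀ V_b⁻¹ X_b, and let I⁺ and I_b⁺ be any Moore–Penrose pseudoinverses of I and I_b respectively. Then the generalized least squares estimators computed in the two representations coincide: I⁺ Xᵀ V⁺ y = I_b⁺ X_bᵀ V_b⁻¹ y_b. -/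
open Matrix

lemma isMoorePenrose_unique {n m : ℕ} {M : Matrix (Fin n) (Fin m) ℝ}
    {N N' : Matrix (Fin m) (Fin n) ℝ}
    (h : IsMoorePenrose M N) (h' : IsMoorePenrose M N') : N = N' := by
  obtain ⟨h1, h2, h3, h4⟩ := h
  obtain ⟨h1', h2', h3', h4'⟩ := h'
  have key1 : M * N = M * N' := by
    have t : M * N = (M * N') * (M * N) := by
      calc M * N = (M * N' * M) * N := by rw [h1']
        _ = (M * N') * (M * N) := by rw [Matrix.mul_assoc]
    calc M * N = (M * N)ᵀ := h3.symm
      _ = ((M * N') * (M * N))ᵀ := by rw [← t]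
      _ = (M * N)ᵀ * (M * N')ᵀ := by rw [Matrix.transpose_mul]
      _ = (M * N) * (M * N') := by rw [h3, h3']
      _ = (M * N * M) * N' := by
          rw [Matrix.mul_assoc (M * N) M N', Matrix.mul_assoc]
      _ = M * N' := by rw [h1]
  have key2 : N * M = N' * M := by
    have t : N * M = (N * M) * (N' * M) := by
      calc N * M = N * (M * N' * M) := by rw [h1']
        _ = (N * M) * (N' * M) := by
            rw [Matrix.mul_assoc M N' M, ← Matrix.mul_assoc, ← Matrix.mul_assoc]
    calc N * M = (N * M)ᵀ := h4.symm
      _ = ((N * M) * (N' * M))ᵀ := by rw [← t]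
      _ = (N' * M)ᵀ * (N * M)ᵀ := by rw [Matrix.transpose_mul]
      _ = (N' * M) * (N * M) := by rw [h4, h4']
      _ = N' * (M * N * M) := by
          rw [Matrix.mul_assoc N' M, Matrix.mul_assoc M N M]
      _ = N' * M := by rw [h1]
  calc N = N * M * N := h2.symm
    _ = N' * M * N := by rw [key2]
    _ = N' * (M * N') := by rw [Matrix.mul_assoc, key1]
    _ = N' := by rw [← Matrix.mul_assoc, h2']

/-- The GLS estimators computed in the full and reduced contrast representations
coincide: `I⁺ Xᵀ V⁺ y = I_b⁺ X_bᵀ V_b⁻¹ y_b`. -/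
theorem gls_estimator_reduced_full_equiv {n k m : ℕ}
    (yb : Fin k → ℝ)
    (Xb : Matrix (Fin k) (Fin m) ℝ)
    (Vb : Matrix (Fin k) (Fin k) ℝ) (hVb : Vb.PosDef)
    (A : Matrix (Fin n) (Fin k) ℝ) (hA : A.rank = k)
    (Vplus : Matrix (Fin n) (Fin n) ℝ)
    (hVplus : IsMoorePenrose (A * Vb * Aᵀ) Vplus)
    (Iplus : Matrix (Fin m) (Fin m) ℝ)
    (hIplus : IsMoorePenrose ((A * Xb)ᵀ * Vplus * (A * Xb)) Iplus)
    (Ibplus : Matrix (Fin m) (Fin m) ℝ)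
    (hIbplus : IsMoorePenrose (Xbᵀ * Vb⁻¹ * Xb) Ibplus) :
    (Iplus * (A * Xb)ᵀ * Vplus).mulVec (A.mulVec yb)
      = (Ibplus * Xbᵀ * Vb⁻¹).mulVec yb := by
  -- basic facts about Vb
  have hVbdet : IsUnit Vb.det := Matrix.isUnit_iff_isUnit_det Vb |>.mp hVb.isUnit
  have hVbsym : Vbᵀ = Vb := by
    have h : Vb.IsSymm := by simpa using hVb.1
    exact h
  -- B := Aᵀ * A is invertible
  have hkerA : LinearMap.ker A.mulVecLin = ⊥ := by
    have hrn := A.mulVecLin.finrank_range_add_finrank_ker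
    have hrk : Module.finrank ℝ (LinearMap.range A.mulVecLin) = k := by
      simpa [Matrix.rank] using hA
    rw [hrk, Module.finrank_fintype_fun_eq_card, Fintype.card_fin] at hrn
    exact Submodule.finrank_eq_zero.mp (by omega)
  have hkerB : LinearMap.ker (Aᵀ * A).mulVecLin = ⊥ := by
    rw [Matrix.ker_mulVecLin_transpose_mul_self]; exact hkerA
  have hBunit : IsUnit (Aᵀ * A) := by
    rw [← Matrix.mulVec_injective_iff_isUnit]
    intro x y hxy
    have : (Aᵀ * A).mulVecLin x = (Aᵀ * A).mulVecLin y := by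
      rw [Matrix.mulVecLin_apply, Matrix.mulVecLin_apply]; exact hxy
    exact LinearMap.ker_eq_bot.mp hkerB this
  have hBdet : IsUnit (Aᵀ * A).det := (Matrix.isUnit_iff_isUnit_det _).mp hBunit
  have hBsym : (Aᵀ * A)ᵀ = Aᵀ * A := by
    rw [Matrix.transpose_mul, Matrix.transpose_transpose]
  -- cancellation lemmas
  have hB1 : ∀ {p : ℕ} (C : Matrix (Fin k) (Fin p) ℝ),
      (Aᵀ * A) * ((Aᵀ * A)⁻¹ * C) = C := fun C => by
    rw [← Matrix.mul_assoc, Matrix.mul_nonsing_inv _ hBdet, Matrix.one_mul]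
  have hB2 : ∀ {p : ℕ} (C : Matrix (Fin k) (Fin p) ℝ),
      (Aᵀ * A)⁻¹ * ((Aᵀ * A) * C) = C := fun C => by
    rw [← Matrix.mul_assoc, Matrix.nonsing_inv_mul _ hBdet, Matrix.one_mul]
  have hV1 : ∀ {p : ℕ} (C : Matrix (Fin k) (Fin p) ℝ),
      Vb * (Vb⁻¹ * C) = C := fun C => by
    rw [← Matrix.mul_assoc, Matrix.mul_nonsing_inv _ hVbdet, Matrix.one_mul]
  have hV2 : ∀ {p : ℕ} (C : Matrix (Fin k) (Fin p) ℝ),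
      Vb⁻¹ * (Vb * C) = C := fun C => by
    rw [← Matrix.mul_assoc, Matrix.nonsing_inv_mul _ hVbdet, Matrix.one_mul]
  have hAA : ∀ {p : ℕ} (C : Matrix (Fin k) (Fin p) ℝ),
      Aᵀ * (A * C) = (Aᵀ * A) * C := fun C => (Matrix.mul_assoc _ _ _).symm
  -- the explicit Moore-Penrose pseudoinverse of A * Vb * Aᵀ
  set N : Matrix (Fin n) (Fin n) ℝ :=
    A * ((Aᵀ * A)⁻¹ * (Vb⁻¹ * ((Aᵀ * A)⁻¹ * Aᵀ))) with hN
  have hMN : (A * Vb * Aᵀ) * N = A * ((Aᵀ * A)⁻¹ * Aᵀ) := by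
    rw [hN]
    simp only [Matrix.mul_assoc]
    rw [hAA, hB1, hV1]
  have hNM : N * (A * Vb * Aᵀ) = A * ((Aᵀ * A)⁻¹ * Aᵀ) := by
    rw [hN]
    simp only [Matrix.mul_assoc]
    rw [hAA, hB2, hV2]
  have hPsym : (A * ((Aᵀ * A)⁻¹ * Aᵀ))ᵀ = A * ((Aᵀ * A)⁻¹ * Aᵀ) := by
    rw [Matrix.transpose_mul, Matrix.transpose_mul, Matrix.transpose_transpose,
      Matrix.transpose_nonsing_inv, hBsym, Matrix.mul_assoc]
  have hNexp : IsMoorePenrose (A * Vb * Aᵀ) N := by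
    refine ⟨?_, ?_, ?_, ?_⟩
    · rw [hMN]
      simp only [Matrix.mul_assoc]
      rw [hAA, hB2]
    · rw [Matrix.mul_assoc, ← Matrix.mul_assoc N, hNM, hN]
      simp only [Matrix.mul_assoc]
      rw [hAA, hB2]
    · rw [hMN]; exact hPsym
    · rw [hNM]; exact hPsym
  have hVplus_eq : Vplus = N := isMoorePenrose_unique hVplus hNexp
  -- Aᵀ Vplus A = Vb⁻¹
  have hAVA : Aᵀ * (Vplus * A) = Vb⁻¹ := by
    rw [hVplus_eq, hN]
    simp only [Matrix.mul_assoc]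
    rw [hAA, hB1, show ((Aᵀ * A)⁻¹ * (Aᵀ * A)) = 1 from Matrix.nonsing_inv_mul _ hBdet,
      Matrix.mul_one]
  -- hence the information matrices coincide
  have hI : (A * Xb)ᵀ * Vplus * (A * Xb) = Xbᵀ * Vb⁻¹ * Xb := by
    rw [Matrix.transpose_mul]
    calc Xbᵀ * Aᵀ * Vplus * (A * Xb)
        = Xbᵀ * (Aᵀ * (Vplus * A)) * Xb := by
          simp only [Matrix.mul_assoc]
      _ = Xbᵀ * Vb⁻¹ * Xb := by rw [hAVA, Matrix.mul_assoc]
  have hIpl : Iplus = Ibplus := by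
    rw [hI] at hIplus
    exact isMoorePenrose_unique hIplus hIbplus
  have hmat : Iplus * (A * Xb)ᵀ * Vplus * A = Ibplus * Xbᵀ * Vb⁻¹ := by
    rw [Matrix.transpose_mul, hIpl]
    calc Ibplus * (Xbᵀ * Aᵀ) * Vplus * A
        = Ibplus * Xbᵀ * (Aᵀ * (Vplus * A)) := by
          simp only [Matrix.mul_assoc]
      _ = Ibplus * Xbᵀ * Vb⁻¹ := by rw [hAVA]
  rw [Matrix.mulVec_mulVec, hmat]
end

section
/- Let y ∈ ℝⁿ, let X be a real n×m matrix, let W be a symmetric positive semidefinite n×n real matrix, and let B be a real m×p matrix whose column space represents a linear constraint subspace. Set J = Bᵀ Xᵀ W X B, let J⁺ be any Moore–Penrose pseudoinverse of J, and define θ̂ = B J⁺ Bᵀ Xᵀ W y. Then θ̂ lies in the column space of B and minimizes the generalized least squares criterion over that subspace: for every φ ∈ ℝᵖ, (y − X θ̂)ᵀ W (y − X θ̂) ≤ (y − X B φ)ᵀ W (y − X B φ). -/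
open Matrix

private lemma key_range {p q : ℕ} (K : Matrix (Fin q) (Fin p) ℝ)
    (Jplus : Matrix (Fin p) (Fin p) ℝ)
    (h1 : (Kᵀ * K) * Jplus * (Kᵀ * K) = Kᵀ * K)
    (h3 : ((Kᵀ * K) * Jplus)ᵀ = (Kᵀ * K) * Jplus) :
    (Kᵀ * K) * Jplus * Kᵀ = Kᵀ := by
  set J := Kᵀ * K with hJ
  set P := J * Jplus with hP
  have hJsymm : Jᵀ = J := by rw [hJ, transpose_mul, transpose_transpose]
  have hPJ : P * J = J := h1
  have hJPt : J * Pᵀ = J := by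
    have h : (P * J)ᵀ = Jᵀ := by rw [hPJ]
    rw [transpose_mul, hJsymm, h3] at h
    rw [← h3]; exact h
  set D := Kᵀ - P * Kᵀ with hD
  have hDDt : D * Dᵀ = 0 := by
    have hexp : D * Dᵀ = J - J * Pᵀ - (P * J - P * (J * Pᵀ)) := by
      rw [hD, transpose_sub, transpose_transpose, transpose_mul, transpose_transpose,
        Matrix.sub_mul, Matrix.mul_sub, Matrix.mul_sub, hJ]
      simp only [Matrix.mul_assoc]
    rw [hexp, hJPt, hPJ]
    simp
  have hD0 : D = 0 := by
    have h := (Matrix.conjTranspose_mul_self_eq_zero (A := Dᵀ)).mp ?_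
    · simpa using congrArg transpose h
    · rwa [conjTranspose_eq_transpose_of_trivial, transpose_transpose]
  have h := sub_eq_zero.mp hD0
  exact h.symm

/-- Subspace-constrained GLS: with `J = Bᵀ Xᵀ W X B` and
`θ̂ = B J⁺ Bᵀ Xᵀ W y`, the estimator `θ̂` lies in the column space of `B` and
minimizes the GLS criterion over that subspace. -/
theorem constrained_gls_estimator {n m p : ℕ}
    (y : Fin n → ℝ)
    (X : Matrix (Fin n) (Fin m) ℝ)
    (W : Matrix (Fin n) (Fin n) ℝ) (hW : W.PosSemidef)
    (B : Matrix (Fin m) (Fin p) ℝ)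
    (Jplus : Matrix (Fin p) (Fin p) ℝ)
    (hJplus : IsMoorePenrose (Bᵀ * (Xᵀ * W * X) * B) Jplus) :
    (∃ φ₀ : Fin p → ℝ,
        (B * Jplus * Bᵀ * Xᵀ * W).mulVec y = B.mulVec φ₀) ∧
    ∀ φ : Fin p → ℝ,
      (y - X.mulVec ((B * Jplus * Bᵀ * Xᵀ * W).mulVec y)) ⬝ᵥ
        W.mulVec (y - X.mulVec ((B * Jplus * Bᵀ * Xᵀ * W).mulVec y)) ≤
      (y - X.mulVec (B.mulVec φ)) ⬝ᵥ W.mulVec (y - X.mulVec (B.mulVec φ)) := by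
  classical
  open scoped MatrixOrder in set S := CFC.sqrt W with hS
  open scoped MatrixOrder in have hSS : S * S = W := CFC.sqrt_mul_sqrt_self W hW.nonneg
  have hSt : Sᵀ = S := by
    open scoped MatrixOrder in have h := (CFC.sqrt_nonneg W).posSemidef.1
    rwa [Matrix.IsHermitian, conjTranspose_eq_transpose_of_trivial] at h
  have hWt : Wᵀ = W := by
    have h := hW.1
    rwa [Matrix.IsHermitian, conjTranspose_eq_transpose_of_trivial] at h
  set K := S * (X * B) with hKdef
  have hK : Kᵀ * K = Bᵀ * (Xᵀ * W * X) * B := by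
    rw [hKdef, transpose_mul, transpose_mul, hSt]
    simp only [Matrix.mul_assoc, ← hSS]
  have h1 : (Kᵀ * K) * Jplus * (Kᵀ * K) = Kᵀ * K := by rw [hK]; exact hJplus.1
  have h3 : ((Kᵀ * K) * Jplus)ᵀ = (Kᵀ * K) * Jplus := by rw [hK]; exact hJplus.2.2.1
  have hkey0 := key_range K Jplus h1 h3
  have hKtS : Kᵀ * S = Bᵀ * Xᵀ * W := by
    rw [hKdef, transpose_mul, transpose_mul, hSt]
    simp only [Matrix.mul_assoc, hSS]
  have hkey : (Kᵀ * K) * Jplus * (Bᵀ * Xᵀ * W) = Bᵀ * Xᵀ * W := by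
    rw [← hKtS, ← Matrix.mul_assoc, hkey0]
  set M := Bᵀ * Xᵀ * W with hM
  set φ₀ : Fin p → ℝ := (Jplus * M).mulVec y with hφ₀
  have hθ : (B * Jplus * Bᵀ * Xᵀ * W).mulVec y = B.mulVec φ₀ := by
    rw [hφ₀, Matrix.mulVec_mulVec, hM]
    simp only [Matrix.mul_assoc]
  set r : Fin n → ℝ := y - X.mulVec (B.mulVec φ₀) with hr
  have hMXB : M * (X * B) = Kᵀ * K := by
    rw [hM, hK]; simp only [Matrix.mul_assoc]
  have hres : M.mulVec r = 0 := by
    rw [hr, Matrix.mulVec_sub]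
    have h2 : M.mulVec (X.mulVec (B.mulVec φ₀)) = M.mulVec y := by
      rw [hφ₀, Matrix.mulVec_mulVec, Matrix.mulVec_mulVec, Matrix.mulVec_mulVec,
        ← Matrix.mul_assoc, ← Matrix.mul_assoc, Matrix.mul_assoc M X B, hMXB,
        Matrix.mul_assoc (Kᵀ * K * Jplus) (Bᵀ * Xᵀ) W, ← hM, hkey]
    rw [h2, sub_self]
  constructor
  · exact ⟨φ₀, hθ⟩
  · intro φ
    rw [hθ]
    set d : Fin p → ℝ := φ - φ₀ with hd
    set u : Fin n → ℝ := X.mulVec (B.mulVec d) with hu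
    have hφsplit : y - X.mulVec (B.mulVec φ) = r - u := by
      rw [hr, hu, hd, Matrix.mulVec_sub, Matrix.mulVec_sub]
      abel
    rw [hφsplit]
    have hcross : u ⬝ᵥ W.mulVec r = 0 := by
      have h : u ⬝ᵥ W.mulVec r = d ⬝ᵥ (M.mulVec r) := by
        rw [hu, Matrix.dotProduct_mulVec, Matrix.mulVec_mulVec]
        rw [← Matrix.mulVec_transpose, Matrix.mulVec_mulVec]
        rw [dotProduct_comm, Matrix.dotProduct_mulVec, ← Matrix.mulVec_transpose]
        rw [hWt, transpose_mul, hWt, transpose_mul, ← hM, dotProduct_comm]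
      rw [h, hres, dotProduct_zero]
    have hcross2 : r ⬝ᵥ W.mulVec u = 0 := by
      have h : r ⬝ᵥ W.mulVec u = u ⬝ᵥ W.mulVec r := by
        rw [Matrix.dotProduct_mulVec, ← Matrix.mulVec_transpose, hWt, dotProduct_comm]
      rw [h, hcross]
    have hpos : 0 ≤ u ⬝ᵥ W.mulVec u := by
      have h := hW.dotProduct_mulVec_nonneg u
      simpa using h
    have hexp : (r - u) ⬝ᵥ W.mulVec (r - u)
        = r ⬝ᵥ W.mulVec r - r ⬝ᵥ W.mulVec u - u ⬝ᵥ W.mulVec r + u ⬝ᵥ W.mulVec u := by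
      rw [Matrix.mulVec_sub, sub_dotProduct, dotProduct_sub,
        dotProduct_sub]
      ring
    rw [hexp, hcross, hcross2]
    linarith
end

section
/- Let V be a symmetric positive semidefinite n×n real matrix with Moore–Penrose pseudoinverse V⁺, and let X be a real n×m matrix whose column space is contained in the column space of V (equivalently, V V⁺ X = X). Set I = Xᵀ V⁺ X with Moore–Penrose pseudoinverse I⁺. Then trace((V⁺ − V⁺ X I⁺ Xᵀ V⁺) V) = rank(V) − rank(I). -/
open Matrix

/-!
Both terms of the trace are traces of idempotents: if `A B A = A` then `B A` is idempotent of
rank `rank A`, and the trace of an idempotent is its rank. The first term is `trace (V⁺ V)`;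
by cyclicity and `V⁺ V V⁺ = V⁺` the second is `trace (I⁺ Xᵀ V⁺ X) = trace (I⁺ I)`.
-/

namespace Matrix

variable {K : Type*} [Field K] {m n : Type*} [Fintype m] [Fintype n]

theorem IsIdempotentElem.trace_eq_rank [DecidableEq n] {P : Matrix n n K}
    (hP : IsIdempotentElem P) : P.trace = (P.rank : K) := by
  have hLin : IsIdempotentElem P.mulVecLin := by
    rw [IsIdempotentElem, Module.End.mul_eq_comp, ← mulVecLin_mul, hP.eq]
  rw [rank, ← (LinearMap.IsIdempotentElem.isProj_range _ hLin).trace, ← toLin'_apply',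
    trace_toLin'_eq]

theorem isIdempotentElem_mul_of_mul_mul_eq {A : Matrix m n K} {B : Matrix n m K}
    (h : A * B * A = A) : IsIdempotentElem (B * A) := by
  rw [IsIdempotentElem, Matrix.mul_assoc, ← Matrix.mul_assoc A, h]

theorem rank_mul_eq_of_mul_mul_eq {A : Matrix m n K} {B : Matrix n m K}
    (h : A * B * A = A) : (B * A).rank = A.rank :=
  le_antisymm (rank_mul_le_right B A) <|
    calc A.rank = (A * (B * A)).rank := by rw [← Matrix.mul_assoc, h]
      _ ≤ (B * A).rank := rank_mul_le_right A (B * A)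

theorem trace_mul_eq_rank_of_mul_mul_eq [DecidableEq n] {A : Matrix m n K} {B : Matrix n m K}
    (h : A * B * A = A) : (B * A).trace = (A.rank : K) := by
  rw [(isIdempotentElem_mul_of_mul_mul_eq h).trace_eq_rank, rank_mul_eq_of_mul_mul_eq h]

end Matrix

theorem q_statistic_degrees_of_freedom_general {n m : ℕ}
    (V : Matrix (Fin n) (Fin n) ℝ)
    (Vplus : Matrix (Fin n) (Fin n) ℝ) (hVplus : IsMoorePenrose V Vplus)
    (X : Matrix (Fin n) (Fin m) ℝ)
    (Iplus : Matrix (Fin m) (Fin m) ℝ)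
    (hIplus : IsMoorePenrose (Xᵀ * Vplus * X) Iplus) :
    ((Vplus - Vplus * X * Iplus * Xᵀ * Vplus) * V).trace
      = (V.rank : ℝ) - ((Xᵀ * Vplus * X).rank : ℝ) := by
  obtain ⟨hVVplusV, hVplusVVplus, -, -⟩ := hVplus
  have hcorrection :
      (Vplus * X * Iplus * Xᵀ * Vplus * V).trace = (Iplus * (Xᵀ * Vplus * X)).trace :=
    calc (Vplus * X * Iplus * Xᵀ * Vplus * V).trace
        = ((Vplus * X * Iplus * Xᵀ) * (Vplus * V)).trace := by simp only [Matrix.mul_assoc]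
      _ = (Vplus * V * Vplus * X * Iplus * Xᵀ).trace := by
          rw [trace_mul_comm]; simp only [Matrix.mul_assoc]
      _ = (Iplus * (Xᵀ * Vplus * X)).trace := by
          rw [hVplusVVplus, Matrix.mul_assoc, trace_mul_comm]; simp only [Matrix.mul_assoc]
  rw [Matrix.sub_mul, trace_sub, hcorrection, trace_mul_eq_rank_of_mul_mul_eq hVVplusV,
    trace_mul_eq_rank_of_mul_mul_eq hIplus.1]

/-- Degrees of freedom of the global inconsistency statistic: if
`col(X) ⊆ col(V)` (equivalently `V V⁺ X = X`), then
`trace((V⁺ - V⁺ X I⁺ Xᵀ V⁺) V) = rank V - rank I` where `I = Xᵀ V⁺ X`. -/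
theorem q_statistic_degrees_of_freedom {n m : ℕ}
    (V : Matrix (Fin n) (Fin n) ℝ) (hV : V.PosSemidef)
    (Vplus : Matrix (Fin n) (Fin n) ℝ) (hVplus : IsMoorePenrose V Vplus)
    (X : Matrix (Fin n) (Fin m) ℝ)
    (hX : V * Vplus * X = X)
    (Iplus : Matrix (Fin m) (Fin m) ℝ)
    (hIplus : IsMoorePenrose (Xᵀ * Vplus * X) Iplus) :
    ((Vplus - Vplus * X * Iplus * Xᵀ * Vplus) * V).trace
      = (V.rank : ℝ) - ((Xᵀ * Vplus * X).rank : ℝ) :=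
  q_statistic_degrees_of_freedom_general V Vplus hVplus X Iplus hIplus
end
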